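/- arXiv:1405.6403 — 3 statements merged into one kernel-verified Lean document; each statement's English description precedes it below -/
import Mathlib

section
/- Fusion rule for the Schrödinger representations: let (r,s) ∈ 𝒟 = {(r,s) ∈ ℝ² : r ≠ 0, s ≠ 0, r+s ≠ 0}. For (x,y,z) ∈ ℍ define operators on L²(ℝ²): A_{r,s}(x,y,z) given by (A_{r,s}(x,y,z)F)(u,v) = e^{2πi(r+s)z + πi(r+s)yx} e^{−2πiy(ru+sv)} F(u−x, v−x) (this is π_r(x,y,z) ⊗ π_s(x,y,z) realized on L²(ℝ²)), and B_{r+s}(x,y,z) given by (B_{r+s}(x,y,z)F)(u,v) = e^{2πi(r+s)z + πi(r+s)yx} e^{−2πi(r+s)yu} F(u−x, v) (this is π_{r+s}(x,y,z) ⊗ I). Then for all (x,y,z) ∈ ℍ, A_{r,s}(x,y,z) = W_{r,s}⁻¹ ∘ B_{r+s}(x,y,z) ∘ W_{r,s}. -/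
open MeasureTheory Complex

/-- The intertwining change-of-variables operator, acting pointwise on functions:
`(W_{r,s}F)(h,k) = F(h − ks/(r+s), h + k − ks/(r+s))`. -/
noncomputable def WFun (r s : ℝ) (F : ℝ × ℝ → ℂ) : ℝ × ℝ → ℂ :=
  fun p => F (p.1 - p.2 * s / (r + s), p.1 + p.2 - p.2 * s / (r + s))

/-- The inverse of `W_{r,s}`, acting pointwise on functions:
`(W_{r,s}⁻¹F)(u,v) = F(u + (v−u)s/(r+s), v − u)`. -/
noncomputable def WInvFun (r s : ℝ) (F : ℝ × ℝ → ℂ) : ℝ × ℝ → ℂ :=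
  fun p => F (p.1 + (p.2 - p.1) * s / (r + s), p.2 - p.1)

/-- `π_r(x,y,z) ⊗ π_s(x,y,z)`, realized on `L²(ℝ²)` acting pointwise on functions:
`(A_{r,s}(x,y,z)F)(u,v) = e^{2πi(r+s)z + πi(r+s)yx} e^{−2πiy(ru+sv)} F(u−x, v−x)`. -/
noncomputable def AFun (r s x y z : ℝ) (F : ℝ × ℝ → ℂ) : ℝ × ℝ → ℂ :=
  fun p =>
    Complex.exp (2 * Real.pi * Complex.I * (r + s) * z +
        Real.pi * Complex.I * (r + s) * y * x) *
      Complex.exp (-(2 * Real.pi * Complex.I * y * (r * p.1 + s * p.2))) *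
      F (p.1 - x, p.2 - x)

/-- `π_{r+s}(x,y,z) ⊗ I`, acting pointwise on functions:
`(B_t(x,y,z)F)(u,v) = e^{2πitz + πityx} e^{−2πityu} F(u−x, v)`. -/
noncomputable def BFun (t x y z : ℝ) (F : ℝ × ℝ → ℂ) : ℝ × ℝ → ℂ :=
  fun p =>
    Complex.exp (2 * Real.pi * Complex.I * t * z + Real.pi * Complex.I * t * y * x) *
      Complex.exp (-(2 * Real.pi * Complex.I * t * y * p.1)) * F (p.1 - x, p.2)

/-- Fusion rule for the Schrödinger representations: for `(r,s) ∈ 𝒟`, the map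
`W_{r,s}⁻¹` is indeed a two-sided inverse for `W_{r,s}`, and
`π_r(x,y,z) ⊗ π_s(x,y,z) = W_{r,s}⁻¹ ∘ (π_{r+s}(x,y,z) ⊗ I) ∘ W_{r,s}`
for every `(x,y,z) ∈ ℍ`. -/
theorem schrodinger_fusion (r s : ℝ) (hr : r ≠ 0) (hs : s ≠ 0) (hrs : r + s ≠ 0) :
    (∀ F : ℝ × ℝ → ℂ, WInvFun r s (WFun r s F) = F ∧ WFun r s (WInvFun r s F) = F) ∧
    (∀ (x y z : ℝ) (F : ℝ × ℝ → ℂ),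
      AFun r s x y z F = WInvFun r s (BFun (r + s) x y z (WFun r s F))) := by
  constructor
  · intro F
    constructor
    · funext p
      simp only [WInvFun, WFun]
      congr 1
      have h1 : p.1 + (p.2 - p.1) * s / (r + s) - (p.2 - p.1) * s / (r + s) = p.1 := by ring
      have h2 : p.1 + (p.2 - p.1) * s / (r + s) + (p.2 - p.1) - (p.2 - p.1) * s / (r + s)
          = p.2 := by ring
      exact Prod.ext h1 h2
    · funext p
      simp only [WInvFun, WFun]
      congr 1
      refine Prod.ext ?_ ?_
      · field_simp
        ring
      · field_simp
        ring
  · intro x y z F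
    funext p
    simp only [AFun, WInvFun, BFun, WFun]
    have key : ((r : ℂ) + s) * (p.1 + (p.2 - p.1) * s / (r + s)) = r * p.1 + s * p.2 := by
      have hrs' : ((r : ℂ) + s) ≠ 0 := by exact_mod_cast hrs
      field_simp
      ring
    have harg : (p.1 + (p.2 - p.1) * s / (r + s) - x - (p.2 - p.1) * s / (r + s),
        p.1 + (p.2 - p.1) * s / (r + s) - x + (p.2 - p.1) - (p.2 - p.1) * s / (r + s))
        = (p.1 - x, p.2 - x) := by
      refine Prod.ext ?_ ?_ <;> simp <;> ring
    have hc : ((r : ℂ) + s) ≠ 0 := by exact_mod_cast hrs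
    rw [harg]
    congr 2
    · congr 1
      push_cast
      ring
    · congr 1
      push_cast
      field_simp
      ring
end

section
/- The intertwining unitaries depend strongly continuously on the parameters: for every fixed F ∈ L²(ℝ²), the maps (r,s) ↦ W_{r,s}F and (r,s) ↦ W_{r,s}⁻¹F are continuous from 𝒟 (with the subspace topology of ℝ²) into L²(ℝ²) (with the L²-norm topology). -/
open MeasureTheory Complex

/-- The parameter domain `𝒟 = {(r,s) ∈ ℝ² : r ≠ 0, s ≠ 0, r+s ≠ 0}`. -/
def fusionDomain : Set (ℝ × ℝ) := {p | p.1 ≠ 0 ∧ p.2 ≠ 0 ∧ p.1 + p.2 ≠ 0}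

/-- The linear map on `ℝ²` with matrix `!![a, b; c, d]`. -/
noncomputable def Wlin (a b c d : ℝ) : (ℝ × ℝ) →ₗ[ℝ] ℝ × ℝ :=
  Matrix.toLin (Module.Basis.finTwoProd ℝ) (Module.Basis.finTwoProd ℝ) !![a, b; c, d]

lemma Wlin_apply (a b c d : ℝ) (x : ℝ × ℝ) :
    Wlin a b c d x = (a * x.1 + b * x.2, c * x.1 + d * x.2) :=
  Matrix.toLin_finTwoProd_apply a b c d x

lemma Wlin_det (a b c d : ℝ) : LinearMap.det (Wlin a b c d) = a * d - b * c := by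
  rw [Wlin, LinearMap.det_toLin, Matrix.det_fin_two_of]

lemma Wlin_continuous (a b c d : ℝ) : Continuous (Wlin a b c d) :=
  (Wlin a b c d).continuous_of_finiteDimensional

lemma Wlin_measurePreserving {a b c d : ℝ} (h : a * d - b * c = 1) :
    MeasurePreserving (Wlin a b c d) (volume : Measure (ℝ × ℝ)) volume := by
  have hdet : LinearMap.det (Wlin a b c d) ≠ 0 := by rw [Wlin_det, h]; norm_num
  refine ⟨(Wlin_continuous a b c d).measurable, ?_⟩
  rw [Measure.map_linearMap_addHaar_eq_smul_addHaar volume hdet, Wlin_det, h]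
  simp

/-- The family of forward change-of-variables maps, as a continuous family of
continuous maps (parametrized by `t = s/(r+s)`). -/
noncomputable def WcmA : C(ℝ, C(ℝ × ℝ, ℝ × ℝ)) :=
  ContinuousMap.curry
    ⟨fun q => Wlin 1 (-q.1) 1 (1 - q.1) q.2, by
      simp only [Wlin_apply]
      fun_prop⟩

/-- The family of inverse change-of-variables maps, as a continuous family of
continuous maps (parametrized by `t = s/(r+s)`). -/
noncomputable def WcmB : C(ℝ, C(ℝ × ℝ, ℝ × ℝ)) :=
  ContinuousMap.curry
    ⟨fun q => Wlin (1 - q.1) q.1 (-1) 1 q.2, by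
      simp only [Wlin_apply]
      fun_prop⟩

lemma WcmA_measurePreserving (t : ℝ) :
    MeasurePreserving (WcmA t) (volume : Measure (ℝ × ℝ)) volume := by
  have : ⇑(WcmA t) = ⇑(Wlin 1 (-t) 1 (1 - t)) := by
    funext x; simp [WcmA]
  rw [this]
  exact Wlin_measurePreserving (by ring)

lemma WcmB_measurePreserving (t : ℝ) :
    MeasurePreserving (WcmB t) (volume : Measure (ℝ × ℝ)) volume := by
  have : ⇑(WcmB t) = ⇑(Wlin (1 - t) t (-1) 1) := by
    funext x; simp [WcmB]
  rw [this]
  exact Wlin_measurePreserving (by ring)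

/-- The intertwining unitaries depend strongly continuously on the parameters: for a
fixed `F ∈ L²(ℝ²)`, any maps `Φ, Ψ : 𝒟 → L²(ℝ²)` with `Φ(r,s) = W_{r,s}F` and
`Ψ(r,s) = W_{r,s}⁻¹F` (a.e. for each `(r,s) ∈ 𝒟`) are continuous from `𝒟` (with the
subspace topology of `ℝ²`) into `L²(ℝ²)` with the norm topology. -/
theorem WFun_strongly_continuous (F : Lp ℂ 2 (volume : Measure (ℝ × ℝ)))
    (Φ Ψ : fusionDomain → Lp ℂ 2 (volume : Measure (ℝ × ℝ)))
    (hΦ : ∀ q : fusionDomain, (Φ q : ℝ × ℝ → ℂ) =ᵐ[volume] WFun q.1.1 q.1.2 F)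
    (hΨ : ∀ q : fusionDomain, (Ψ q : ℝ × ℝ → ℂ) =ᵐ[volume] WInvFun q.1.1 q.1.2 F) :
    Continuous Φ ∧ Continuous Ψ := by
  set c : fusionDomain → ℝ := fun q => q.1.2 / (q.1.1 + q.1.2) with hc
  have hcc : Continuous c := by
    apply Continuous.div
    · fun_prop
    · fun_prop
    · exact fun q => q.2.2.2
  have hp : (2 : ENNReal) ≠ ⊤ := by norm_num
  constructor
  · have hΦeq : Φ = fun q =>
        Lp.compMeasurePreserving (WcmA (c q)) (WcmA_measurePreserving (c q)) F := by
      funext q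
      refine Lp.ext ((hΦ q).trans ?_)
      refine (Filter.EventuallyEq.of_eq ?_).trans
        (Lp.coeFn_compMeasurePreserving F (WcmA_measurePreserving (c q))).symm
      funext p
      show (F : ℝ × ℝ → ℂ) _ = (F : ℝ × ℝ → ℂ) (WcmA (c q) p)
      congr 1
      simp only [WcmA, ContinuousMap.curry_apply, ContinuousMap.coe_mk, Wlin_apply, hc]
      exact Prod.ext (by ring) (by ring)
    rw [hΦeq]
    exact Continuous.compMeasurePreservingLp continuous_const
      ((ContinuousMap.continuous WcmA).comp hcc) _ hp
  · have hΨeq : Ψ = fun q =>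
        Lp.compMeasurePreserving (WcmB (c q)) (WcmB_measurePreserving (c q)) F := by
      funext q
      refine Lp.ext ((hΨ q).trans ?_)
      refine (Filter.EventuallyEq.of_eq ?_).trans
        (Lp.coeFn_compMeasurePreserving F (WcmB_measurePreserving (c q))).symm
      funext p
      show (F : ℝ × ℝ → ℂ) _ = (F : ℝ × ℝ → ℂ) (WcmB (c q) p)
      congr 1
      simp only [WcmB, ContinuousMap.curry_apply, ContinuousMap.coe_mk, Wlin_apply, hc]
      exact Prod.ext (by ring) (by ring)
    rw [hΨeq]
    exact Continuous.compMeasurePreservingLp continuous_const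
      ((ContinuousMap.continuous WcmB).comp hcc) _ hp
end

section
/- Every non-abelian nilpotent real Lie algebra contains a copy of the three-dimensional Heisenberg Lie algebra: if L is a Lie algebra over ℝ that is nilpotent and not abelian (i.e., there exist a, b ∈ L with ⁅a,b⁆ ≠ 0), then there exist x, y ∈ L such that ⁅x,y⁆ ≠ 0, the element ⁅x,y⁆ is central in L (⁅⁅x,y⁆, w⁆ = 0 for all w ∈ L), and the three elements x, y, ⁅x,y⁆ are linearly independent over ℝ. In particular the ℝ-span of x, y, ⁅x,y⁆ is a Lie subalgebra of L isomorphic to the Heisenberg Lie algebra 𝔥₃. -/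
/-!
If `k + 2` is the nilpotency length of `L`, then `C_{k+1} = ⁅L, C_k⁆` is nonzero while
`⁅L, C_{k+1}⁆ = 0`; so some bracket `z = ⁅x, y⁆` with `y ∈ C_k` is nonzero and central. Bracketing
a relation `a • x + b • y + c • z = 0` with `y` and then with `x` kills `a` and `b`, and then `c`.
-/

namespace LieModule

variable {R L M : Type*} [CommRing R] [LieRing L] [LieAlgebra R L]
  [AddCommGroup M] [Module R M] [LieRingModule L M] [LieModule R L M]

theorem exists_lie_ne_zero_mem_maxTrivSubmodule [IsNilpotent L M] (h : ¬IsTrivial L M) :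
    ∃ (x : L) (m : M), ⁅x, m⁆ ≠ 0 ∧ ⁅x, m⁆ ∈ maxTrivSubmodule R L M := by
  obtain ⟨k, hk⟩ : ∃ k, nilpotencyLength L M = k + 2 :=
    Nat.exists_eq_add_of_le' (not_le.mp (mt (isTrivial_of_nilpotencyLength_le_one L M) h))
  obtain ⟨hbot, hne⟩ := (nilpotencyLength_eq_succ_iff R L M (k + 1)).mp hk
  have hcentral : lowerCentralSeries R L M (k + 1) ≤ maxTrivSubmodule R L M :=
    (le_max_triv_iff_bracket_eq_bot R L M).mpr (lowerCentralSeries_succ R L M (k + 1) ▸ hbot)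
  rw [lowerCentralSeries_succ] at hne hcentral
  obtain ⟨x, -, m, hm, hxm⟩ : ∃ x ∈ (⊤ : LieIdeal R L), ∃ m ∈ lowerCentralSeries R L M k,
      ⁅x, m⁆ ≠ 0 := by
    by_contra! hzero
    exact hne ((LieSubmodule.lie_eq_bot_iff _ _).mpr hzero)
  exact ⟨x, m, hxm, hcentral (LieSubmodule.lie_mem_lie (LieSubmodule.mem_top x) hm)⟩

end LieModule

theorem LieAlgebra.linearIndependent_of_lie_ne_zero {K L : Type*} [Field K] [LieRing L]
    [LieAlgebra K L] {x y : L} (hxy : ⁅x, y⁆ ≠ 0) (hx : ⁅⁅x, y⁆, x⁆ = 0)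
    (hy : ⁅⁅x, y⁆, y⁆ = 0) : LinearIndependent K ![x, y, ⁅x, y⁆] := by
  rw [Fintype.linearIndependent_iff]
  intro c hc
  simp only [Fin.sum_univ_three, Matrix.cons_val_zero, Matrix.cons_val_one,
    Matrix.cons_val_two, Matrix.head_cons, Matrix.tail_cons] at hc
  have hc0 : c 0 = 0 := by
    have := congr_arg (⁅·, y⁆) hc
    simp only [add_lie, smul_lie, lie_self, hy, smul_zero, add_zero, zero_lie] at this
    exact (smul_eq_zero.mp this).resolve_right hxy
  have hc1 : c 1 = 0 := by
    have hx' : ⁅x, ⁅x, y⁆⁆ = 0 := by rw [← lie_skew, hx, neg_zero]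
    have := congr_arg (⁅x, ·⁆) hc
    simp only [lie_add, lie_smul, lie_self, hx', smul_zero, add_zero, zero_add, lie_zero] at this
    exact (smul_eq_zero.mp this).resolve_right hxy
  have hc2 : c 2 = 0 := by
    simp only [hc0, hc1, zero_smul, zero_add] at hc
    exact (smul_eq_zero.mp hc).resolve_right hxy
  intro i
  fin_cases i <;> assumption

/-- Every non-abelian nilpotent real Lie algebra contains a copy of the
three-dimensional Heisenberg Lie algebra `𝔥₃`: there are `x, y` with `⁅x,y⁆ ≠ 0`,
`⁅x,y⁆` central, and `x, y, ⁅x,y⁆` linearly independent over `ℝ`. -/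
theorem nilpotent_nonabelian_contains_heisenberg (L : Type*) [LieRing L]
    [LieAlgebra ℝ L] [LieRing.IsNilpotent L] (h : ∃ a b : L, ⁅a, b⁆ ≠ 0) :
    ∃ x y : L, ⁅x, y⁆ ≠ 0 ∧ (∀ w : L, ⁅⁅x, y⁆, w⁆ = 0) ∧
      LinearIndependent ℝ ![x, y, ⁅x, y⁆] := by
  have hnontriv : ¬LieModule.IsTrivial L L := by
    obtain ⟨a, b, hab⟩ := h
    exact fun _ => hab (trivial_lie_zero L L a b)
  obtain ⟨x, y, hxy, hcenter⟩ :=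
    LieModule.exists_lie_ne_zero_mem_maxTrivSubmodule (R := ℝ) hnontriv
  have hcentral (w : L) : ⁅⁅x, y⁆, w⁆ = 0 := by
    rw [← lie_skew, (LieModule.mem_maxTrivSubmodule ℝ L L _).mp hcenter w, neg_zero]
  exact ⟨x, y, hxy, hcentral,
    LieAlgebra.linearIndependent_of_lie_ne_zero hxy (hcentral x) (hcentral y)⟩
end
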